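/- In a graph product with shortlex ordering compatible with a total order on vertices, for any subset V' of the vertex set, the shortlex normal forms of G_V lying in X_{V'}^* are exactly the shortlex normal forms of the subgraph product G_{V'}: SL(G_V, X_V) \cap X_{V'}^* = SL(G_{V'}, X_{V'}). -/

import Mathlib

/-- Word length of `g` over a generating subset `X` of a group. -/
noncomputable def wlen {G : Type*} [Group G] (X : Set G) (g : G) : ℕ :=
  sInf {n | ∃ w : List G, w.length = n ∧ (∀ x ∈ w, x ∈ X) ∧ w.prod = g}

/-- The defining commutator relators of a graph product. -/
def gpRels {V : Type*} (Γ : SimpleGraph V) (G : V → Type*) [∀ v, Group (G v)] :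
    Set (Monoid.CoprodI G) :=
  {x | ∃ (v w : V) (a : G v) (b : G w), Γ.Adj v w ∧
    x = Monoid.CoprodI.of a * Monoid.CoprodI.of b *
          (Monoid.CoprodI.of a)⁻¹ * (Monoid.CoprodI.of b)⁻¹}

/-- The graph product of the groups `G v` over the graph `Γ`. -/
abbrev GraphProduct {V : Type*} (Γ : SimpleGraph V) (G : V → Type*) [∀ v, Group (G v)] :
    Type _ :=
  Monoid.CoprodI G ⧸ Subgroup.normalClosure (gpRels Γ G)

/-- The canonical homomorphism from a vertex group into the graph product. -/
def GraphProduct.of {V : Type*} (Γ : SimpleGraph V) (G : V → Type*) [∀ v, Group (G v)]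
    (v : V) : G v →* GraphProduct Γ G :=
  (QuotientGroup.mk' _).comp Monoid.CoprodI.of

/-- The generating set `X_S = ∪_{v ∈ S} X_v` inside the graph product. -/
def XS {V : Type*} (Γ : SimpleGraph V) (G : V → Type*) [∀ v, Group (G v)]
    (X : ∀ v, Set (G v)) (S : Set V) : Set (GraphProduct Γ G) :=
  ⋃ v ∈ S, (GraphProduct.of Γ G v) '' (X v)

/-- The alphabet of letters: a vertex together with a generator of its vertex group. -/
abbrev GPLetter {V : Type*} (G : V → Type*) (X : ∀ v, Set (G v)) : Type _ :=
  Σ v : V, {x : G v // x ∈ X v}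

/-- Evaluation of a word over the alphabet in the graph product. -/
def evalWord {V : Type*} (Γ : SimpleGraph V) (G : V → Type*) [∀ v, Group (G v)]
    (X : ∀ v, Set (G v)) (w : List (GPLetter G X)) : GraphProduct Γ G :=
  (w.map fun a => GraphProduct.of Γ G a.1 a.2.1).prod

/-- The shortlex order on words induced by a strict order `lt` on letters:
shorter words come first, and words of equal length are compared lexicographically. -/
def shortlex {A : Type*} (lt : A → A → Prop) (w u : List A) : Prop :=
  w.length < u.length ∨ (w.length = u.length ∧ List.Lex lt w u)

/-- The order on letters compatible with the total order on `V`: letters with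
smaller support come first, letters with the same support are compared by `r`. -/
def letterLt {V : Type*} [LinearOrder V] (G : V → Type*) (X : ∀ v, Set (G v))
    (r : ∀ v, {x : G v // x ∈ X v} → {x : G v // x ∈ X v} → Prop) :
    GPLetter G X → GPLetter G X → Prop :=
  Sigma.Lex (· < ·) r

/-- The shortlex normal forms of the subgraph product `G_{V'}`: words over the
sub-alphabet `X_{V'}` that are shortlex-least among all words over `X_{V'}`
representing the same element. -/
def SLwords {V : Type*} [LinearOrder V] (Γ : SimpleGraph V) (G : V → Type*)
    [∀ v, Group (G v)] (X : ∀ v, Set (G v))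
    (r : ∀ v, {x : G v // x ∈ X v} → {x : G v // x ∈ X v} → Prop)
    (V' : Set V) : Set (List (GPLetter G X)) :=
  {w | (∀ a ∈ w, a.1 ∈ V') ∧
    ∀ u : List (GPLetter G X), (∀ a ∈ u, a.1 ∈ V') →
      evalWord Γ G X u = evalWord Γ G X w → u = w ∨ shortlex (letterLt G X r) w u}

/-!
Killing the vertex groups outside `V'` defines a retraction of `G_V` onto the subgroup
generated by the vertex groups in `V'`; on words it deletes the letters outside `X_{V'}`.
So any word `u` over `X_V` representing the same element as a word `w` over `X_{V'}` can
be filtered to a word over `X_{V'}` that still represents that element and is a sublist of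
`u`. If `w` is shortlex-least over `X_{V'}`, it precedes the filtered word, and the filtered
word is either `u` itself or strictly shorter, so `w` precedes `u` as well.
-/

open scoped commutatorElement

namespace GraphProduct

variable {V : Type*} (Γ : SimpleGraph V) (G : V → Type*) [∀ v, Group (G v)]

theorem commutatorElement_of_of_eq_one {v w : V} (hadj : Γ.Adj v w) (a : G v) (b : G w) :
    ⁅of Γ G v a, of Γ G w b⁆ = 1 :=
  (QuotientGroup.eq_one_iff _).mpr (Subgroup.subset_normalClosure ⟨v, w, a, b, hadj, rfl⟩)

noncomputable def retract (V' : Set V) [DecidablePred (· ∈ V')] :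
    GraphProduct Γ G →* GraphProduct Γ G :=
  QuotientGroup.lift _ (Monoid.CoprodI.lift fun v => if v ∈ V' then of Γ G v else 1) <| by
    refine fun x hx => MonoidHom.mem_ker.mp (Subgroup.normalClosure_le_normal ?_ hx)
    rintro y ⟨v, w, a, b, hadj, rfl⟩
    have := commutatorElement_of_of_eq_one Γ G hadj a b
    rw [commutatorElement_def] at this
    by_cases hv : v ∈ V' <;> by_cases hw : w ∈ V' <;> simp [hv, hw, this]

theorem retract_of (V' : Set V) [DecidablePred (· ∈ V')] (v : V) (x : G v) :
    retract Γ G V' (of Γ G v x) = if v ∈ V' then of Γ G v x else 1 := by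
  change (Monoid.CoprodI.lift fun v => if v ∈ V' then of Γ G v else 1) (Monoid.CoprodI.of x) = _
  rw [Monoid.CoprodI.lift_of]
  split_ifs <;> rfl

theorem retract_evalWord (X : ∀ v, Set (G v)) (V' : Set V) [DecidablePred (· ∈ V')]
    (u : List (GPLetter G X)) :
    retract Γ G V' (evalWord Γ G X u) = evalWord Γ G X (u.filter fun a => a.1 ∈ V') := by
  induction u with
  | nil => simp [evalWord]
  | cons a u ih =>
    simp only [evalWord, List.map_cons, List.prod_cons, map_mul] at ih ⊢
    rw [ih, retract_of, List.filter_cons]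
    by_cases h : a.1 ∈ V' <;> simp [h]

end GraphProduct

theorem shortlex_of_sublist {A : Type*} {lt : A → A → Prop} {w u' u : List A}
    (hsub : u'.Sublist u) (h : u' = w ∨ shortlex lt w u') : u = w ∨ shortlex lt w u := by
  rcases hsub.length_le.eq_or_lt with hlen | hlen
  · rwa [hsub.eq_of_length hlen] at h
  · have hw : w.length ≤ u'.length := by
      rcases h with rfl | h | h
      exacts [le_rfl, h.le, h.1.le]
    exact Or.inr (Or.inl (hw.trans_lt hlen))

theorem shortlexNormalForms_subgraphProduct_general {V : Type*} [LinearOrder V]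
    (Γ : SimpleGraph V) (G : V → Type*) [∀ v, Group (G v)] (X : ∀ v, Set (G v))
    (r : ∀ v, {x : G v // x ∈ X v} → {x : G v // x ∈ X v} → Prop)
    (V' : Set V) :
    {w | w ∈ SLwords Γ G X r Set.univ ∧ ∀ a ∈ w, a.1 ∈ V'}
      = SLwords Γ G X r V' := by
  classical
  ext w
  constructor
  · rintro ⟨⟨-, hmin⟩, hw⟩
    exact ⟨hw, fun u _ hu => hmin u (fun _ _ => trivial) hu⟩
  · rintro ⟨hw, hmin⟩
    refine ⟨⟨fun _ _ => trivial, fun u _ hu => ?_⟩, hw⟩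
    have hw_filter : w.filter (fun a => a.1 ∈ V') = w := List.filter_eq_self.mpr (by simpa)
    have hu_filter : evalWord Γ G X (u.filter fun a => a.1 ∈ V') = evalWord Γ G X w := by
      rw [← GraphProduct.retract_evalWord, hu, GraphProduct.retract_evalWord, hw_filter]
    refine shortlex_of_sublist List.filter_sublist (hmin _ ?_ hu_filter)
    simp

/-- In a graph product over a finite simple graph with shortlex ordering compatible
with a total order on the vertices, for any `V' ⊆ V` the shortlex normal forms of
`G_V` lying in `X_{V'}^*` are exactly the shortlex normal forms of the subgraph
product: `SL(G_V, X_V) ∩ X_{V'}^* = SL(G_{V'}, X_{V'})`. -/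
theorem shortlexNormalForms_subgraphProduct {V : Type*} [Fintype V] [LinearOrder V]
    (Γ : SimpleGraph V) (G : V → Type*) [∀ v, Group (G v)] (X : ∀ v, Set (G v))
    (hinv : ∀ v, ∀ x ∈ X v, x⁻¹ ∈ X v)
    (hgen : ∀ v, Subgroup.closure (X v) = ⊤)
    (r : ∀ v, {x : G v // x ∈ X v} → {x : G v // x ∈ X v} → Prop)
    (hr : ∀ v, IsStrictTotalOrder {x : G v // x ∈ X v} (r v))
    (V' : Set V) :
    {w | w ∈ SLwords Γ G X r Set.univ ∧ ∀ a ∈ w, a.1 ∈ V'}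
      = SLwords Γ G X r V' :=
  shortlexNormalForms_subgraphProduct_general Γ G X r V'
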